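/- Let (c_j)_{j≥1} be real numbers and (λ_j)_{j≥1} positive reals, and define f_{−1} = 0, f_0 = 1, and f_j(x) = (x − c_j)f_{j−1}(x) − λ_j f_{j−2}(x) for j ≥ 1. Then for every j ≥ 1, f_j has j distinct real roots and f_{j−1} interlaces f_j (the roots of f_{j−1} strictly separate those of f_j). -/

import Mathlib

/-!
Induct on `j`, carrying the strictly increasing roots `t` of `f (j + 1)`. Evaluating the
recurrence at a root `t i` of `f (j + 1)` gives `f (j + 2) (t i) = -λ f j (t i)`, and since the
roots of `f j` interlace the `t i`, the product formula for `f j` shows that `f (j + 2)` has sign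
`(-1) ^ (j + 1 - i)` at `t i`. Adding a point far to the left and one far to the right, where the
monic `f (j + 2)` has signs `(-1) ^ (j + 2)` and `+1`, gives `j + 3` points of alternating sign;
the intermediate value theorem then produces `j + 2` roots, one in each gap, and these are all
the roots of `f (j + 2)` because it has degree `j + 2`.
-/

open Polynomial Filter Finset Asymptotics

theorem Polynomial.monic_and_natDegree_eq_of_three_term_recurrence {R : Type*} [CommRing R]
    [Nontrivial R] {c lam : ℕ → R} {f : ℕ → R[X]} (hf0 : f 0 = 1) (hf1 : f 1 = X - C (c 1))
    (hrec : ∀ j, f (j + 2) = (X - C (c (j + 2))) * f (j + 1) - C (lam (j + 2)) * f j) :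
    ∀ j, (f j).Monic ∧ (f j).natDegree = j
  | 0 => by simp [hf0]
  | 1 => by simp [hf1, monic_X_sub_C]
  | j + 2 => by
    obtain ⟨-, hd0⟩ := monic_and_natDegree_eq_of_three_term_recurrence hf0 hf1 hrec j
    obtain ⟨hm1, hd1⟩ := monic_and_natDegree_eq_of_three_term_recurrence hf0 hf1 hrec (j + 1)
    have hlead : ((X - C (c (j + 2))) * f (j + 1)).natDegree = j + 2 := by
      rw [(monic_X_sub_C _).natDegree_mul hm1, natDegree_X_sub_C, hd1, add_comm]
    have hlow :
        (C (lam (j + 2)) * f j).natDegree < ((X - C (c (j + 2))) * f (j + 1)).natDegree :=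
      (natDegree_C_mul_le _ _).trans_lt (by omega)
    rw [hrec]
    exact ⟨((monic_X_sub_C _).mul hm1).sub_of_left (degree_lt_degree hlow),
      (natDegree_sub_eq_left_of_natDegree_lt hlow).trans hlead⟩

theorem neg_one_pow_mul_prod_sub_pos {n : ℕ} (s : Fin n → ℝ) {x : ℝ} {i : ℕ}
    (hi : i ≤ n) (hlt : ∀ k : Fin n, (k : ℕ) < i → s k < x)
    (hgt : ∀ k : Fin n, i ≤ k → x < s k) :
    0 < (-1) ^ (n - i) * ∏ k, (x - s k) := by
  have hsign : ∏ k : Fin n, (if (k : ℕ) < i then 1 else -1 : ℝ) = (-1) ^ (n - i) := by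
    rw [prod_ite, prod_const_one, one_mul, prod_const, filter_not,
      card_sdiff_of_subset (filter_subset _ _), Fin.card_filter_val_lt, card_univ,
      Fintype.card_fin, min_eq_right hi]
  rw [← hsign, ← prod_mul_distrib]
  refine prod_pos fun k _ => ?_
  by_cases hk : (k : ℕ) < i
  · simpa [hk] using hlt k hk
  · simpa [hk] using hgt k (not_lt.1 hk)

theorem Polynomial.Monic.neg_one_pow_mul_eval_pos_of_interlacing {p : ℝ[X]} (hp : p.Monic)
    {n : ℕ} (hdeg : p.natDegree = n) {s : Fin n → ℝ}
    (hroots : p.roots = Multiset.map s univ.val) {t : Fin (n + 1) → ℝ} (ht : Monotone t)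
    (hint : ∀ i : Fin n, t i.castSucc < s i ∧ s i < t i.succ) (i : Fin (n + 1)) :
    0 < (-1) ^ (n - i) * p.eval (t i) := by
  have hprod : p.eval (t i) = ∏ k, (t i - s k) := by
    conv_lhs => rw [← prod_multiset_X_sub_C_of_monic_of_roots_card_eq hp (by simp [hroots, hdeg])]
    simp only [hroots, Multiset.map_map, eval_multiset_prod, Function.comp_def, eval_sub, eval_X,
      eval_C]
    rfl
  rw [hprod]
  refine neg_one_pow_mul_prod_sub_pos s i.is_le (fun k hk => ?_) (fun k hk => ?_)
  · exact (hint k).2.trans_le (ht (Fin.le_def.2 (by simpa using hk)))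
  · exact (ht (Fin.le_def.2 (by simpa using hk))).trans_lt (hint k).1

theorem Polynomial.Monic.eventually_atTop_eval_pos {p : ℝ[X]} (hp : p.Monic) :
    ∀ᶠ x in atTop, 0 < p.eval x :=
  p.isEquivalent_atTop_lead.eventually_pos <|
    (eventually_gt_atTop 0).mono fun x hx => by simpa [hp.leadingCoeff] using pow_pos hx _

theorem Polynomial.Monic.eventually_atBot_neg_one_pow_mul_eval_pos {p : ℝ[X]} (hp : p.Monic) :
    ∀ᶠ x in atBot, 0 < (-1) ^ p.natDegree * p.eval x :=
  ((IsEquivalent.refl (u := fun _ ↦ (-1 : ℝ) ^ p.natDegree)).mul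
    p.isEquivalent_atBot_lead).eventually_pos <| (eventually_lt_atBot 0).mono fun x hx => by
      simpa [hp.leadingCoeff, ← mul_pow] using pow_pos (neg_pos.2 hx) p.natDegree

theorem exists_mem_Ioo_eq_zero_of_mul_neg {g : ℝ → ℝ} {a b : ℝ} (hab : a ≤ b)
    (hg : ContinuousOn g (Set.Icc a b)) (h : g a * g b < 0) : ∃ x ∈ Set.Ioo a b, g x = 0 := by
  rcases mul_neg_iff.1 h with ⟨ha, hb⟩ | ⟨ha, hb⟩
  · exact intermediate_value_Ioo' hab hg ⟨hb, ha⟩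
  · exact intermediate_value_Ioo hab hg ⟨ha, hb⟩

theorem mul_neg_of_neg_one_pow_mul_pos {a b : ℝ} {n : ℕ} (ha : 0 < (-1) ^ (n + 1) * a)
    (hb : 0 < (-1) ^ n * b) : a * b < 0 := by
  have h := mul_pos ha hb
  rw [pow_succ, show (-1 : ℝ) ^ n * -1 * a * ((-1) ^ n * b) = -(((-1) ^ n) ^ 2 * (a * b)) by ring,
    ← pow_mul, mul_comm n, pow_mul, neg_one_sq, one_pow, one_mul] at h
  linarith

theorem exists_strictMono_zeros_of_alternating {m : ℕ} {g : ℝ → ℝ} (hg : Continuous g)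
    {T : Fin (m + 1) → ℝ} (hT : StrictMono T)
    (hsign : ∀ k : Fin (m + 1), 0 < (-1) ^ (m - k) * g (T k)) :
    ∃ u : Fin m → ℝ, StrictMono u ∧ (∀ k, g (u k) = 0) ∧
      ∀ k, T k.castSucc < u k ∧ u k < T k.succ := by
  have hzero (k : Fin m) : ∃ x ∈ Set.Ioo (T k.castSucc) (T k.succ), g x = 0 := by
    refine exists_mem_Ioo_eq_zero_of_mul_neg (hT k.castSucc_lt_succ).le hg.continuousOn
      (mul_neg_of_neg_one_pow_mul_pos (n := m - k.succ) ?_ (hsign k.succ))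
    have hexp : m - k.castSucc = m - k.succ + 1 := by
      simp only [Fin.val_castSucc, Fin.val_succ]; omega
    simpa only [hexp] using hsign k.castSucc
  choose u hu hu0 using hzero
  refine ⟨u, fun a b hab => ?_, hu0, hu⟩
  calc u a < T a.succ := (hu a).2
    _ ≤ T b.castSucc := hT.monotone (Fin.succ_le_castSucc_iff.2 hab)
    _ < u b := (hu b).1

theorem Polynomial.roots_eq_map_of_injective {R : Type*} [CommRing R] [IsDomain R] {p : R[X]}
    (hp : p ≠ 0) {n : ℕ} (hdeg : p.natDegree = n) {u : Fin n → R} (hu : Function.Injective u)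
    (hroot : ∀ k, p.eval (u k) = 0) : p.roots = Multiset.map u univ.val := by
  have hle : Multiset.map u univ.val ≤ p.roots := by
    rw [Multiset.le_iff_subset (univ.nodup.map hu)]
    rintro _ hx
    obtain ⟨k, -, rfl⟩ := Multiset.mem_map.1 hx
    exact (mem_roots hp).2 (hroot k)
  refine (Multiset.eq_of_le_of_card_le hle ?_).symm
  simpa [hdeg] using p.card_roots'

theorem Polynomial.Monic.exists_roots_interlacing {p : ℝ[X]} (hp : p.Monic) {n : ℕ}
    (hdeg : p.natDegree = n + 1) {t : Fin n → ℝ} (ht : StrictMono t)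
    (hsign : ∀ i : Fin n, 0 < (-1) ^ (n - i) * p.eval (t i)) :
    ∃ u : Fin (n + 1) → ℝ, StrictMono u ∧ p.roots = Multiset.map u univ.val ∧
      ∀ i, u i.castSucc < t i ∧ t i < u i.succ := by
  obtain ⟨a, ha, hat⟩ := (hp.eventually_atBot_neg_one_pow_mul_eval_pos.and
    (eventually_all.2 fun i => eventually_lt_atBot (t i))).exists
  obtain ⟨b, hb, hab, htb⟩ := (hp.eventually_atTop_eval_pos.and ((eventually_gt_atTop a).and
    (eventually_all.2 fun i => eventually_gt_atTop (t i)))).exists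
  set T : Fin (n + 2) → ℝ := Fin.cons a (Fin.snoc t b)
  have hT : StrictMono T := by
    refine Fin.strictMono_cons.2 ⟨fun j => ?_, ?_⟩
    · cases j using Fin.lastCases <;> simp [hab, hat]
    · rw [← Fin.insertNth_last', Fin.strictMono_insertNth_iff]
      exact ⟨ht, fun i _ => by simpa using htb i, fun i hi => absurd hi (by simp)⟩
  have hsignT (k : Fin (n + 2)) : 0 < (-1) ^ (n + 1 - k) * p.eval (T k) := by
    cases k using Fin.cases with
    | zero => simpa [T, hdeg] using ha
    | succ j => cases j using Fin.lastCases <;> simp [T, hb, hsign]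
  obtain ⟨u, hu, hu0, huT⟩ := exists_strictMono_zeros_of_alternating p.continuous hT hsignT
  refine ⟨u, hu, roots_eq_map_of_injective hp.ne_zero hdeg hu.injective hu0, fun i => ?_⟩
  simpa [T, ← Fin.succ_castSucc] using And.intro (huT i.castSucc).2 (huT i.succ).1

theorem favard_interlacing (c lam : ℕ → ℝ) (hlam : ∀ j, 1 ≤ j → 0 < lam j)
    (f : ℕ → Polynomial ℝ)
    (hf0 : f 0 = 1)
    (hf1 : f 1 = Polynomial.X - Polynomial.C (c 1))
    (hfrec : ∀ j, 2 ≤ j →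
      f j = (Polynomial.X - Polynomial.C (c j)) * f (j - 1) - Polynomial.C (lam j) * f (j - 2)) :
    ∀ j : ℕ, ∃ (t : Fin (j + 1) → ℝ) (s : Fin j → ℝ),
      StrictMono t ∧ StrictMono s ∧
      (f (j + 1)).roots = Multiset.map t Finset.univ.val ∧
      (f j).roots = Multiset.map s Finset.univ.val ∧
      ∀ i : Fin j, t i.castSucc < s i ∧ s i < t i.succ := by
  have hrec (j : ℕ) : f (j + 2) = (X - C (c (j + 2))) * f (j + 1) - C (lam (j + 2)) * f j := by
    simpa using hfrec (j + 2) (by omega)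
  have hmon := monic_and_natDegree_eq_of_three_term_recurrence hf0 hf1 hrec
  intro j
  induction j with
  | zero =>
    exact ⟨fun _ => c 1, Fin.elim0, Subsingleton.strictMono (α := Fin 1) _,
      Subsingleton.strictMono _, by simp [hf1], by simp [hf0], fun i => Fin.elim0 i⟩
  | succ j ih =>
    obtain ⟨t, s, ht, -, hrt, hrs, hint⟩ := ih
    have hsign (i : Fin (j + 1)) : 0 < (-1) ^ (j + 1 - i) * (f (j + 2)).eval (t i) := by
      have hroot : (f (j + 1)).eval (t i) = 0 :=
        (mem_roots (hmon (j + 1)).1.ne_zero).1 (hrt ▸ Multiset.mem_map_of_mem _ (mem_univ_val i))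
      have hfj := (hmon j).1.neg_one_pow_mul_eval_pos_of_interlacing (hmon j).2 hrs
        ht.monotone hint i
      rw [hrec, eval_sub, eval_mul, hroot, mul_zero, zero_sub, eval_mul, eval_C,
        Nat.sub_add_comm i.is_le, pow_succ]
      exact (mul_pos (hlam (j + 2) (by omega)) hfj).trans_eq (by ring)
    obtain ⟨u, hu, hru, hut⟩ :=
      (hmon (j + 2)).1.exists_roots_interlacing (hmon (j + 2)).2 ht hsign
    exact ⟨u, t, hu, ht, hru, hrt, hut⟩
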